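/- arXiv:1707.09214 — 5 statements merged into one kernel-verified Lean document; each statement's English description precedes it below -/
import Mathlib

section
/- For every integer r ≥ 3 and every d ≥ r, one has M_r(d) ≥ M_3(d−r+3): infecting the complement of a (d−r+3)-dimensional subcube together with a percolating configuration of maximal percolation time for the 3-neighbour process inside that subcube yields a percolating configuration for the r-neighbour process on Q_d whose percolation time is at least M_3(d−r+3). -/
/-- A vertex of the `d`-dimensional hypercube `{0,1}^d`. -/
abbrev Cube (d : ℕ) := Fin d → Bool

/-- One step of `r`-neighbour bootstrap percolation on `Q_d`: a vertex becomes infected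
if it has at least `r` infected neighbours (neighbours = Hamming distance 1). -/
noncomputable def bootStep (d r : ℕ) (A : Set (Cube d)) : Set (Cube d) :=
  A ∪ {v | r ≤ {u : Cube d | hammingDist u v = 1 ∧ u ∈ A}.ncard}

/-- The set of infected sites at time `t`, starting from `A`. -/
noncomputable def boot (d r : ℕ) (A : Set (Cube d)) : ℕ → Set (Cube d)
  | 0 => A
  | t + 1 => bootStep d r (boot d r A t)

/-- `A` percolates: eventually every vertex is infected. -/
def Percolates (d r : ℕ) (A : Set (Cube d)) : Prop :=
  ∃ t, boot d r A t = Set.univ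

/-- The percolation time of `A`: the least `t` with all sites infected. -/
noncomputable def percTime (d r : ℕ) (A : Set (Cube d)) : ℕ :=
  sInf {t | boot d r A t = Set.univ}

/-- `M_r(d)`: the maximal percolation time over percolating subsets of `Q_d`. -/
noncomputable def maxPercTime (d r : ℕ) : ℕ :=
  sSup {T | ∃ A : Set (Cube d), Percolates d r A ∧ percTime d r A = T}

/-- The infection time `t_v` of a vertex `v`. -/
noncomputable def infTime (d r : ℕ) (A : Set (Cube d)) (v : Cube d) : ℕ :=
  sInf {t | v ∈ boot d r A t}

/-- A `k`-snake of length `T` in `Q_d`: a path `S_0, …, S_T` (consecutive vertices at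
Hamming distance 1, all vertices distinct) such that `d(S_t, S_{t'}) ≥ k` whenever
`t' − t ≥ k`. -/
def IsSnake (d k T : ℕ) (S : ℕ → Cube d) : Prop :=
  (∀ t, t < T → hammingDist (S t) (S (t + 1)) = 1) ∧
  (∀ t t', t ≤ T → t' ≤ T → S t = S t' → t = t') ∧
  (∀ t t', t' ≤ T → t + k ≤ t' → k ≤ hammingDist (S t) (S t'))

/-- `s(d)`: the maximal length of a `3`-snake in `Q_d`. -/
noncomputable def snakeMax (d : ℕ) : ℕ :=
  sSup {T | ∃ S : ℕ → Cube d, IsSnake d 3 T S}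

/-- `‖x‖`: the number of `1`-coordinates of `x`. -/
def wt {d : ℕ} (x : Cube d) : ℕ := hammingDist x (fun _ => false)

/-- The vertex of `Q_d` whose `1`-coordinates are exactly the positions in `s`
(0-indexed). -/
def ofOnes (d : ℕ) (s : Finset ℕ) : Cube d := fun i => decide (i.val ∈ s)

/-- `(b, a)`: the vertex of `Q_d` with first coordinate `b` and remaining coordinates `a`. -/
def extendCube (d : ℕ) (b : Bool) (a : Cube (d - 1)) : Cube d :=
  fun i => if h : i.val = 0 then b else a ⟨i.val - 1, by have := i.isLt; omega⟩

/-- `(y, x)`: the vertex of `Q_d` whose first `9` coordinates have `1`s exactly at the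
(0-indexed) positions in `ys ⊆ {0,…,8}` and whose last `d − 9` coordinates are `x`. -/
def embed9 (d : ℕ) (ys : Finset ℕ) (x : Cube (d - 9)) : Cube d :=
  fun i => if h : i.val < 9 then decide (i.val ∈ ys) else x ⟨i.val - 9, by have := i.isLt; omega⟩

/-- `J_1 = [1,1][*]^{d-2}`: vertices whose first two coordinates are `1`. -/
def J1 (d : ℕ) : Set (Cube d) := {x | ∀ i : Fin d, i.val < 2 → x i = true}

/-- `J_2`: the two vertices whose only `1`-coordinates are coordinate 3 together with
exactly one of coordinates 1 and 2 (1-indexed). -/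
def J2 (d : ℕ) : Set (Cube d) := {ofOnes d {0, 2}, ofOnes d {1, 2}}

/-- `J_3`: vertices with `(x_1,x_2,x_3) ∈ {(0,1,0),(1,0,0)}` whose last `d' = d-3`
coordinates form the word `0^{2l} 1 1 0^{d'-2-2l}` for some `0 ≤ l ≤ (d'-2)/2`. -/
def J3 (d : ℕ) : Set (Cube d) :=
  {x | ∃ l : ℕ, 2 * l + 2 ≤ d - 3 ∧
    (x = ofOnes d {0, 3 + 2 * l, 4 + 2 * l} ∨ x = ofOnes d {1, 3 + 2 * l, 4 + 2 * l})}

/-- The five snake conditions of Lemma 3 (for a `3`-snake of length `T` in `Q_{d''}`). -/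
def SnakeConds (d'' T : ℕ) (S : ℕ → Cube d'') : Prop :=
  S T = ofOnes d'' ∅ ∧ S (T - 1) = ofOnes d'' {0} ∧ S (T - 2) = ofOnes d'' {0, 2} ∧
  S (T - 3) = ofOnes d'' {0, 2, 4} ∧ ∀ t, t < T - 3 → 3 < wt (S t)

/-- `S^i = {S_{T-i-3j} : j ≥ 0, T-i-3j ≥ 0}`. -/
def SnakeTail (d'' T : ℕ) (S : ℕ → Cube d'') (i : ℕ) : Set (Cube d'') :=
  {x | ∃ j : ℕ, 3 * j + i ≤ T ∧ x = S (T - i - 3 * j)}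

/-- `I_0`: vertices whose last `d'' = d - 9` coordinates belong to `S^i` for some
`i ∈ {1,2,3}` and whose first `9` coordinates are all `0` except exactly one of the two
coordinates in (1-indexed) positions `2i+2` and `2i+3`, which equals `1`. -/
def I0 (d T : ℕ) (S : ℕ → Cube (d - 9)) : Set (Cube d) :=
  {v | ∃ i ∈ ({1, 2, 3} : Set ℕ), ∃ x ∈ SnakeTail (d - 9) T S i,
    v = embed9 d {2 * i + 1} x ∨ v = embed9 d {2 * i + 2} x}

/-!
Pad each vertex of `Q_m` with `k` ones, embedding `Q_m` as a subcube of `Q_{m+k}`, and infect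
everything outside that subcube. Every subcube vertex then has exactly `k` infected neighbours
outside it, so the `(r + k)`-neighbour process restricted to the subcube is the `r`-neighbour
process on `Q_m`, while the outside stays infected; in particular the percolation times agree.
The maximum `M_r(m)` is attained because the infected set grows strictly until it is everything,
so percolation times are at most `2^m`.
-/

namespace Cube

variable {d : ℕ}

def flip (v : Cube d) (i : Fin d) : Cube d := Function.update v i (!v i)

@[simp] lemma flip_apply_self (v : Cube d) (i : Fin d) : v.flip i i = !v i :=
  Function.update_self ..

lemma flip_apply_of_ne (v : Cube d) {i j : Fin d} (h : j ≠ i) : v.flip i j = v j :=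
  Function.update_of_ne h ..

lemma flip_injective (v : Cube d) : Function.Injective v.flip := by
  intro i j h
  by_contra hne
  have := congrFun h i
  rw [flip_apply_self, flip_apply_of_ne v hne] at this
  exact Bool.not_ne_self _ this

lemma hammingDist_eq_one_iff {u v : Cube d} : hammingDist u v = 1 ↔ ∃ i, u = v.flip i := by
  rw [hammingDist, Finset.card_eq_one]
  constructor
  · rintro ⟨i, hi⟩
    have hne : ∀ j, u j ≠ v j ↔ j = i := fun j => by
      simpa using Finset.ext_iff.mp hi j
    refine ⟨i, funext fun j => ?_⟩
    rcases eq_or_ne j i with rfl | hji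
    · exact (flip_apply_self v j).symm ▸ Bool.eq_not.mpr ((hne j).2 rfl)
    · rw [flip_apply_of_ne v hji]
      exact not_not.mp (mt (hne j).1 hji)
  · rintro ⟨i, rfl⟩
    refine ⟨i, Finset.ext fun j => ?_⟩
    rcases eq_or_ne j i with rfl | hji
    · simp
    · simp [flip_apply_of_ne v hji, hji]

lemma ncard_neighbours (v : Cube d) (S : Set (Cube d)) :
    {u | hammingDist u v = 1 ∧ u ∈ S}.ncard = {i | v.flip i ∈ S}.ncard := by
  have : {u | hammingDist u v = 1 ∧ u ∈ S} = v.flip '' {i | v.flip i ∈ S} := by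
    ext u
    simp only [Set.mem_ofPred_eq, hammingDist_eq_one_iff, Set.mem_image]
    constructor
    · rintro ⟨⟨i, rfl⟩, hu⟩
      exact ⟨i, hu, rfl⟩
    · rintro ⟨i, hi, rfl⟩
      exact ⟨⟨i, rfl⟩, hi⟩
  rw [this, Set.ncard_image_of_injective _ v.flip_injective]

variable {m k : ℕ}

def padOnes (k : ℕ) (x : Cube m) : Cube (m + k) := Fin.append x fun _ => true

lemma padOnes_injective : Function.Injective (padOnes (m := m) k) := by
  intro x y h
  funext i
  simpa [padOnes] using congrFun h (Fin.castAdd k i)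

lemma flip_padOnes_castAdd (x : Cube m) (i : Fin m) :
    (padOnes k x).flip (Fin.castAdd k i) = padOnes k (x.flip i) := by
  funext j
  refine Fin.addCases (fun j => ?_) (fun j => ?_) j
  · rcases eq_or_ne j i with rfl | hji
    · simp [padOnes]
    · rw [flip_apply_of_ne _ (by simpa using hji)]
      simp [padOnes, flip_apply_of_ne x hji]
  · rw [flip_apply_of_ne _ fun h => by simp [Fin.ext_iff] at h; omega]
    simp [padOnes]

lemma flip_padOnes_natAdd_notMem_range (x : Cube m) (i : Fin k) :
    (padOnes k x).flip (Fin.natAdd m i) ∉ Set.range (padOnes k) := by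
  rintro ⟨y, hy⟩
  have := congrFun hy (Fin.natAdd m i)
  simp [padOnes] at this

end Cube

open Cube

lemma mem_bootStep_iff {d r : ℕ} {A : Set (Cube d)} {v : Cube d} :
    v ∈ bootStep d r A ↔ v ∈ A ∨ r ≤ {i | v.flip i ∈ A}.ncard := by
  rw [bootStep, Set.mem_union, Set.mem_ofPred_eq, ncard_neighbours]

lemma Fin.ncard_setOf_add {m n : ℕ} (p : Fin (m + n) → Prop) :
    {i | p i}.ncard = {j | p (Fin.castAdd n j)}.ncard + {j | p (Fin.natAdd m j)}.ncard := by
  classical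
  simp only [Set.ncard_eq_toFinset_card', Set.toFinset_ofPred, Finset.card_filter]
  exact Fin.sum_univ_add _

section Subcube

variable {m k : ℕ}

def infectOutside (k : ℕ) (A : Set (Cube m)) : Set (Cube (m + k)) :=
  (Set.range (padOnes k))ᶜ ∪ padOnes k '' A

lemma padOnes_mem_infectOutside_iff {A : Set (Cube m)} {x : Cube m} :
    padOnes k x ∈ infectOutside k A ↔ x ∈ A := by
  simp [infectOutside, padOnes_injective.mem_set_image]

lemma infectOutside_eq_univ_iff {A : Set (Cube m)} :
    infectOutside k A = Set.univ ↔ A = Set.univ := by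
  simp only [Set.eq_univ_iff_forall]
  constructor
  · exact fun h x => padOnes_mem_infectOutside_iff.mp (h _)
  · rintro h v
    by_cases hv : v ∈ Set.range (padOnes k)
    · obtain ⟨x, rfl⟩ := hv
      exact padOnes_mem_infectOutside_iff.mpr (h x)
    · exact Or.inl hv

lemma ncard_flip_padOnes_mem_infectOutside (A : Set (Cube m)) (x : Cube m) :
    {i | (padOnes k x).flip i ∈ infectOutside k A}.ncard = {j | x.flip j ∈ A}.ncard + k := by
  rw [Fin.ncard_setOf_add]
  simp only [flip_padOnes_castAdd, padOnes_mem_infectOutside_iff]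
  have houtside (j : Fin k) : (padOnes k x).flip (Fin.natAdd m j) ∈ infectOutside k A :=
    Or.inl (flip_padOnes_natAdd_notMem_range x j)
  simp [houtside]

lemma bootStep_infectOutside (r : ℕ) (A : Set (Cube m)) :
    bootStep (m + k) (r + k) (infectOutside k A) = infectOutside k (bootStep m r A) := by
  ext v
  by_cases hv : v ∈ Set.range (padOnes k)
  · obtain ⟨x, rfl⟩ := hv
    rw [mem_bootStep_iff, padOnes_mem_infectOutside_iff, padOnes_mem_infectOutside_iff,
      mem_bootStep_iff, ncard_flip_padOnes_mem_infectOutside, Nat.add_le_add_iff_right]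
  · exact iff_of_true (Or.inl (Or.inl hv)) (Or.inl hv)

lemma boot_infectOutside (r : ℕ) (A : Set (Cube m)) (t : ℕ) :
    boot (m + k) (r + k) (infectOutside k A) t = infectOutside k (boot m r A t) := by
  induction t with
  | zero => rfl
  | succ t ih => rw [boot, ih, bootStep_infectOutside, boot]

lemma percolates_infectOutside_iff {r : ℕ} {A : Set (Cube m)} :
    Percolates (m + k) (r + k) (infectOutside k A) ↔ Percolates m r A := by
  simp only [Percolates, boot_infectOutside, infectOutside_eq_univ_iff]

lemma percTime_infectOutside (r : ℕ) (A : Set (Cube m)) :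
    percTime (m + k) (r + k) (infectOutside k A) = percTime m r A := by
  simp only [percTime, boot_infectOutside, infectOutside_eq_univ_iff]

end Subcube

section PercolationTime

variable {d r : ℕ} {A : Set (Cube d)}

def percTimes (d r : ℕ) : Set ℕ := {T | ∃ A : Set (Cube d), Percolates d r A ∧ percTime d r A = T}

lemma boot_subset_succ (t : ℕ) : boot d r A t ⊆ boot d r A (t + 1) :=
  Set.subset_union_left

lemma boot_eq_of_boot_succ_eq {t : ℕ} (h : boot d r A (t + 1) = boot d r A t) :
    ∀ s, t ≤ s → boot d r A s = boot d r A t := by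
  intro s hs
  induction s, hs using Nat.le_induction with
  | base => rfl
  | succ s _ ih => rw [boot, ih, ← boot, h]

lemma boot_percTime (hA : Percolates d r A) : boot d r A (percTime d r A) = Set.univ :=
  Nat.sInf_mem hA

lemma boot_ssubset_succ_of_lt_percTime (hA : Percolates d r A) {t : ℕ}
    (ht : t < percTime d r A) : boot d r A t ⊂ boot d r A (t + 1) := by
  refine (boot_subset_succ t).ssubset_of_ne fun h => ?_
  have hstable := boot_eq_of_boot_succ_eq h.symm (percTime d r A) ht.le
  rw [boot_percTime hA] at hstable
  exact ht.not_ge (Nat.sInf_le hstable.symm)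

lemma le_ncard_boot (hA : Percolates d r A) {t : ℕ} (ht : t ≤ percTime d r A) :
    t ≤ (boot d r A t).ncard := by
  induction t with
  | zero => exact Nat.zero_le _
  | succ t ih =>
    have hlt := Set.ncard_lt_ncard (boot_ssubset_succ_of_lt_percTime hA ht) (Set.toFinite _)
    have := ih (Nat.le_of_succ_le ht)
    omega

lemma percTime_le_card (hA : Percolates d r A) : percTime d r A ≤ Nat.card (Cube d) :=
  calc percTime d r A ≤ (boot d r A (percTime d r A)).ncard := le_ncard_boot hA le_rfl
    _ ≤ Nat.card (Cube d) := Set.ncard_le_card _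

lemma bddAbove_percTimes : BddAbove (percTimes d r) :=
  ⟨Nat.card (Cube d), by rintro _ ⟨A, hA, rfl⟩; exact percTime_le_card hA⟩

lemma percTimes_nonempty : (percTimes d r).Nonempty :=
  ⟨_, Set.univ, ⟨0, rfl⟩, rfl⟩

lemma exists_percTime_eq_maxPercTime :
    ∃ A : Set (Cube d), Percolates d r A ∧ percTime d r A = maxPercTime d r :=
  Nat.sSup_mem percTimes_nonempty bddAbove_percTimes

lemma percTime_le_maxPercTime (hA : Percolates d r A) : percTime d r A ≤ maxPercTime d r :=
  le_csSup bddAbove_percTimes ⟨A, hA, rfl⟩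

end PercolationTime

theorem maxPercTime_le_maxPercTime_add (m k r : ℕ) :
    maxPercTime m r ≤ maxPercTime (m + k) (r + k) := by
  obtain ⟨A, hA, hAmax⟩ := exists_percTime_eq_maxPercTime (d := m) (r := r)
  rw [← hAmax, ← percTime_infectOutside]
  exact percTime_le_maxPercTime (percolates_infectOutside_iff.mpr hA)

/-- For every `r ≥ 3` and `d ≥ r`, `M_r(d) ≥ M_3(d − r + 3)`. -/
theorem stmt6 (r d : ℕ) (hr : 3 ≤ r) (hd : r ≤ d) :
    maxPercTime (d - r + 3) 3 ≤ maxPercTime d r := by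
  have h := maxPercTime_le_maxPercTime_add (d - r + 3) (r - 3) 3
  rwa [show d - r + 3 + (r - 3) = d by omega, show 3 + (r - 3) = r by omega] at h
end

section
/- Let r ≥ 1 and let A ⊆ Q_d be a set that percolates under r-neighbour bootstrap percolation; for each vertex v let t_v = min{t : v ∈ A_t} be its infection time. Then the number of edges {u,v} of the hypercube with |t_v − t_u| ≥ 2 is at most (r−1)·2^d. -/
theorem Sym2.ncard_setOf_mk_le {V : Type*} [Fintype V] (R : V → V → Prop) (k : ℕ)
    (hR : ∀ v, {u | R u v}.ncard ≤ k) :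
    {e : Sym2 V | ∃ u v, e = s(u, v) ∧ R u v}.ncard ≤ k * Fintype.card V := by
  have hsub : {e : Sym2 V | ∃ u v, e = s(u, v) ∧ R u v} ⊆ ⋃ v, (s(·, v)) '' {u | R u v} := by
    rintro _ ⟨u, v, rfl, huv⟩
    exact Set.mem_iUnion.2 ⟨v, u, huv, rfl⟩
  calc _ ≤ (⋃ v, (s(·, v)) '' {u | R u v}).ncard := Set.ncard_le_ncard hsub
    _ ≤ ∑ v, ((s(·, v)) '' {u | R u v}).ncard := Set.ncard_iUnion_le_of_fintype _
    _ ≤ ∑ _v : V, k :=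
        Finset.sum_le_sum fun v _ => (Set.ncard_image_le (Set.toFinite _)).trans (hR v)
    _ = k * Fintype.card V := by simp [mul_comm]

section Bootstrap

variable {d r : ℕ} {A : Set (Cube d)}

theorem boot_mono : Monotone (boot d r A) :=
  monotone_nat_of_le_succ fun _ => Set.subset_union_left

theorem infTime_le_of_mem {v : Cube d} {t : ℕ} (h : v ∈ boot d r A t) : infTime d r A v ≤ t :=
  Nat.sInf_le h

theorem mem_boot_infTime (hA : Percolates d r A) (v : Cube d) :
    v ∈ boot d r A (infTime d r A v) := by
  obtain ⟨t, ht⟩ := hA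
  have hv : v ∈ boot d r A t := by rw [ht]; trivial
  exact Nat.sInf_mem (⟨t, hv⟩ : {t | v ∈ boot d r A t}.Nonempty)

theorem ncard_early_neighbours_le (hA : Percolates d r A) (v : Cube d) :
    {u | hammingDist u v = 1 ∧ infTime d r A u + 2 ≤ infTime d r A v}.ncard ≤ r - 1 := by
  set t := infTime d r A v
  obtain ht | ht := lt_or_ge t 2
  · have hempty : {u | hammingDist u v = 1 ∧ infTime d r A u + 2 ≤ t} = ∅ :=
      Set.eq_empty_of_forall_notMem fun u hu => by have := hu.2; omega
    simp [hempty]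
  have hv : v ∉ bootStep d r (boot d r A (t - 2)) := fun h => by
    have : t ≤ t - 2 + 1 := infTime_le_of_mem (show v ∈ boot d r A (t - 2 + 1) from h)
    omega
  have hfew : {u | hammingDist u v = 1 ∧ u ∈ boot d r A (t - 2)}.ncard < r :=
    lt_of_not_ge fun h => hv (Or.inr h)
  have hsub : {u | hammingDist u v = 1 ∧ infTime d r A u + 2 ≤ t} ⊆
      {u | hammingDist u v = 1 ∧ u ∈ boot d r A (t - 2)} := fun u ⟨huv, hu⟩ =>
    ⟨huv, boot_mono (by omega) (mem_boot_infTime hA u)⟩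
  have := Set.ncard_le_ncard hsub
  omega

end Bootstrap

theorem stmt9_general (d r : ℕ) (A : Set (Cube d)) (hA : Percolates d r A) :
    {e : Sym2 (Cube d) | ∃ u v : Cube d, e = s(u, v) ∧ hammingDist u v = 1 ∧
        (infTime d r A u + 2 ≤ infTime d r A v ∨
          infTime d r A v + 2 ≤ infTime d r A u)}.ncard
      ≤ (r - 1) * 2 ^ d := by
  have horient : {e : Sym2 (Cube d) | ∃ u v : Cube d, e = s(u, v) ∧ hammingDist u v = 1 ∧
        (infTime d r A u + 2 ≤ infTime d r A v ∨ infTime d r A v + 2 ≤ infTime d r A u)} ⊆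
      {e | ∃ u v, e = s(u, v) ∧ hammingDist u v = 1 ∧ infTime d r A u + 2 ≤ infTime d r A v} := by
    rintro _ ⟨u, v, rfl, huv, h | h⟩
    · exact ⟨u, v, rfl, huv, h⟩
    · exact ⟨v, u, Sym2.eq_swap, hammingDist_comm u v ▸ huv, h⟩
  calc _ ≤ _ := Set.ncard_le_ncard horient
    _ ≤ (r - 1) * Fintype.card (Cube d) :=
        Sym2.ncard_setOf_mk_le _ _ (ncard_early_neighbours_le hA)
    _ = (r - 1) * 2 ^ d := by simp

/-- If `A` percolates under `r`-neighbour bootstrap percolation, the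
number of edges `{u,v}` of the hypercube with `|t_v − t_u| ≥ 2` is at most `(r−1)·2^d`. -/
theorem stmt9 (d r : ℕ) (hr : 1 ≤ r) (A : Set (Cube d)) (hA : Percolates d r A) :
    {e : Sym2 (Cube d) | ∃ u v : Cube d, e = s(u, v) ∧ hammingDist u v = 1 ∧
        (infTime d r A u + 2 ≤ infTime d r A v ∨
          infTime d r A v + 2 ≤ infTime d r A u)}.ncard
      ≤ (r - 1) * 2 ^ d :=
  stmt9_general d r A hA
end

section
/- Let d ≥ 15 be odd and d' = d − 3. The pairs of distinct vertices of J_3 at Hamming distance at most 2 are exactly the pairs {u, w} where u and w have the same last d coordinates except that (u_1,u_2) = (1,0) and (w_1,w_2) = (0,1) and u, w agree in all coordinates from position 3 onwards; moreover each such pair is at Hamming distance exactly 2. In particular any two distinct vertices of J_3 agreeing in their first two coordinates are at Hamming distance at least 4. -/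
/-! The vertices of `J_3` are the indicator vectors of `{a, 3 + 2l, 4 + 2l}` with `a ∈ {0, 1}`,
and the Hamming distance of two indicator vectors is the size of the symmetric difference of
their supports. For `l ≠ l'` the pairs `{3 + 2l, 4 + 2l}` and `{3 + 2l', 4 + 2l'}` are disjoint
and avoid `{0, 1}`, giving distance at least `4`; for `l = l'` only the coordinate `a` can
differ. -/

open Finset
open scoped symmDiff

theorem hammingDist_ofOnes {d : ℕ} {s t : Finset ℕ} (h : s ∆ t ⊆ range d) :
    hammingDist (ofOnes d s) (ofOnes d t) = #(s ∆ t) := by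
  rw [hammingDist, ← card_map Fin.valEmbedding]
  congr 1
  ext n
  have mem_symmDiff_iff (k : ℕ) : decide (k ∈ s) ≠ decide (k ∈ t) ↔ k ∈ s ∆ t := by
    rw [ne_eq, decide_eq_decide, mem_symmDiff]
    tauto
  simp only [mem_map, mem_filter, mem_univ, true_and, Fin.valEmbedding_apply, ofOnes,
    mem_symmDiff_iff]
  exact ⟨by rintro ⟨i, hi, rfl⟩; exact hi, fun hn => ⟨⟨n, mem_range.mp (h hn)⟩, hn, rfl⟩⟩

theorem hammingDist_ofOnes_insert_zero_insert_one {d : ℕ} {r : Finset ℕ} (hd : 1 < d)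
    (h0 : 0 ∉ r) (h1 : 1 ∉ r) :
    hammingDist (ofOnes d (insert 0 r)) (ofOnes d (insert 1 r)) = 2 := by
  have hsymm : insert 0 r ∆ insert 1 r = {0, 1} := by
    ext n
    simp only [mem_symmDiff, mem_insert, mem_singleton]
    by_cases hn : n = 0 ∨ n = 1
    · rcases hn with rfl | rfl <;> simp [h0, h1]
    · tauto
  rw [hammingDist_ofOnes (by simp [hsymm, insert_subset_iff]; omega), hsymm]
  rfl

theorem four_le_card_symmDiff {a a' l l' : ℕ} (ha : a < 3) (ha' : a' < 3) (hl : l ≠ l') :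
    4 ≤ #({a, 3 + 2 * l, 4 + 2 * l} ∆ {a', 3 + 2 * l', 4 + 2 * l'} : Finset ℕ) := by
  calc 4 = #({3 + 2 * l, 4 + 2 * l, 3 + 2 * l', 4 + 2 * l'} : Finset ℕ) := by
        rw [card_insert_of_notMem (by simp; omega), card_insert_of_notMem (by simp; omega),
          card_pair (by omega)]
    _ ≤ _ := card_le_card fun n hn => by
        simp only [mem_insert, mem_singleton, mem_symmDiff] at hn ⊢
        omega

theorem four_le_hammingDist_ofOnes {d a a' l l' : ℕ} (ha : a < 3) (ha' : a' < 3)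
    (hl : 4 + 2 * l < d) (hl' : 4 + 2 * l' < d) (hll' : l ≠ l') :
    4 ≤ hammingDist (ofOnes d {a, 3 + 2 * l, 4 + 2 * l})
      (ofOnes d {a', 3 + 2 * l', 4 + 2 * l'}) := by
  rw [hammingDist_ofOnes (symmDiff_subset_union.trans fun n hn => by simp at hn ⊢; omega)]
  exact four_le_card_symmDiff ha ha' hll'

theorem exists_eq_ofOnes_of_mem_J3 {d : ℕ} {x : Cube d} (hx : x ∈ J3 d) :
    ∃ a < 2, ∃ l, 2 * l + 2 ≤ d - 3 ∧ x = ofOnes d {a, 3 + 2 * l, 4 + 2 * l} := by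
  obtain ⟨l, hl, rfl | rfl⟩ := hx
  exacts [⟨0, two_pos, l, hl, rfl⟩, ⟨1, one_lt_two, l, hl, rfl⟩]

theorem stmt16_general (d : ℕ) :
    (∀ u ∈ J3 d, ∀ w ∈ J3 d, u ≠ w → hammingDist u w ≤ 2 →
      hammingDist u w = 2 ∧ ∃ l : ℕ, 2 * l + 2 ≤ d - 3 ∧
        ((u = ofOnes d {0, 3 + 2 * l, 4 + 2 * l} ∧ w = ofOnes d {1, 3 + 2 * l, 4 + 2 * l}) ∨
         (u = ofOnes d {1, 3 + 2 * l, 4 + 2 * l} ∧ w = ofOnes d {0, 3 + 2 * l, 4 + 2 * l}))) ∧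
    (∀ l : ℕ, 2 * l + 2 ≤ d - 3 →
      hammingDist (ofOnes d {0, 3 + 2 * l, 4 + 2 * l}) (ofOnes d {1, 3 + 2 * l, 4 + 2 * l})
        = 2) ∧
    (∀ u ∈ J3 d, ∀ w ∈ J3 d, u ≠ w → (∀ i : Fin d, i.val < 2 → u i = w i) →
      4 ≤ hammingDist u w) := by
  have hdist_zero_one (l : ℕ) (hl : 2 * l + 2 ≤ d - 3) :
      hammingDist (ofOnes d {0, 3 + 2 * l, 4 + 2 * l}) (ofOnes d {1, 3 + 2 * l, 4 + 2 * l}) = 2 :=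
    hammingDist_ofOnes_insert_zero_insert_one (by omega) (by simp; omega) (by simp; omega)
  refine ⟨?_, hdist_zero_one, ?_⟩
  · rintro u hu w hw hne hle
    obtain ⟨a, ha, l, hl, rfl⟩ := exists_eq_ofOnes_of_mem_J3 hu
    obtain ⟨a', ha', l', hl', rfl⟩ := exists_eq_ofOnes_of_mem_J3 hw
    obtain rfl : l = l' := by
      by_contra hll'
      have := four_le_hammingDist_ofOnes (d := d) (a := a) (a' := a')
        (by omega) (by omega) (by omega) (by omega) hll'
      omega
    obtain ⟨rfl, rfl⟩ | ⟨rfl, rfl⟩ : a = 0 ∧ a' = 1 ∨ a = 1 ∧ a' = 0 := by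
      have : a ≠ a' := by rintro rfl; exact hne rfl
      omega
    exacts [⟨hdist_zero_one l hl, l, hl, .inl ⟨rfl, rfl⟩⟩,
      ⟨by rw [hammingDist_comm]; exact hdist_zero_one l hl, l, hl, .inr ⟨rfl, rfl⟩⟩]
  · rintro u hu w hw hne hagree
    obtain ⟨a, ha, l, hl, rfl⟩ := exists_eq_ofOnes_of_mem_J3 hu
    obtain ⟨a', ha', l', hl', rfl⟩ := exists_eq_ofOnes_of_mem_J3 hw
    obtain rfl : a = a' := by
      have hcoord := hagree ⟨a, by omega⟩ ha
      simp only [ofOnes, mem_insert, mem_singleton, true_or, decide_true, Bool.true_eq,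
        decide_eq_true_eq] at hcoord
      omega
    have hll' : l ≠ l' := by rintro rfl; exact hne rfl
    exact four_le_hammingDist_ofOnes (by omega) (by omega) (by omega) (by omega) hll'

/-- Let `d ≥ 15` be odd. The pairs of distinct vertices of `J_3` at
Hamming distance at most `2` are exactly the pairs `{u, w}` with `(u_1,u_2) = (1,0)`,
`(w_1,w_2) = (0,1)` agreeing in all coordinates from position 3 onwards (same `l`);
each such pair is at distance exactly `2`. In particular any two distinct vertices of
`J_3` agreeing in their first two coordinates are at Hamming distance at least `4`. -/
theorem stmt16 (d : ℕ) (hd : 15 ≤ d) (hodd : Odd d) :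
    (∀ u ∈ J3 d, ∀ w ∈ J3 d, u ≠ w → hammingDist u w ≤ 2 →
      hammingDist u w = 2 ∧ ∃ l : ℕ, 2 * l + 2 ≤ d - 3 ∧
        ((u = ofOnes d {0, 3 + 2 * l, 4 + 2 * l} ∧ w = ofOnes d {1, 3 + 2 * l, 4 + 2 * l}) ∨
         (u = ofOnes d {1, 3 + 2 * l, 4 + 2 * l} ∧ w = ofOnes d {0, 3 + 2 * l, 4 + 2 * l}))) ∧
    (∀ l : ℕ, 2 * l + 2 ≤ d - 3 →
      hammingDist (ofOnes d {0, 3 + 2 * l, 4 + 2 * l}) (ofOnes d {1, 3 + 2 * l, 4 + 2 * l})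
        = 2) ∧
    (∀ u ∈ J3 d, ∀ w ∈ J3 d, u ≠ w → (∀ i : Fin d, i.val < 2 → u i = w i) →
      4 ≤ hammingDist u w) :=
  stmt16_general d
end

section
/- Let d ≥ 15 be odd, d'' = d − 9, and let S be a 3-snake of length T ≥ 3 in Q_{d''}. Then every vertex i_1 ∈ I_0 has exactly one other vertex i_2 ∈ I_0 \ {i_1} at Hamming distance at most 2, namely the vertex obtained from i_1 by exchanging the values of the two coordinates in positions 2i+2 and 2i+3 (where i is the index with the last d'' coordinates of i_1 lying in S^i); this i_2 is at Hamming distance exactly 2 from i_1 and differs from i_1 only in coordinates among positions 4 through 9. -/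
/-! Writing vertices of `Q_d` as `(y, x)`, Hamming distance splits as `d(y, y') + d(x, x')`.
Two vertices of `I_0` with different `y` (distinct singletons) are therefore at distance at
least `2`, with equality only if they share the snake vertex `x`; as the tails `S^1, S^2, S^3`
are disjoint, this pins down the partner. Two vertices of `I_0` with the same `y` lie over the
same tail `S^i`, whose elements are `3`-snake vertices a multiple of three steps apart, hence at
distance at least `3` unless equal. -/

theorem hammingDist_fin_append {α : Type*} [DecidableEq α] {m n : ℕ} (a a' : Fin m → α)
    (b b' : Fin n → α) :
    hammingDist (Fin.append a b) (Fin.append a' b') = hammingDist a a' + hammingDist b b' := by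
  simp only [hammingDist, Finset.card_filter, Fin.sum_univ_add, Fin.append_left,
    Fin.append_right]

theorem hammingDist_comp_equiv {ι ι' β : Type*} [Fintype ι] [Fintype ι'] [DecidableEq β]
    (e : ι' ≃ ι) (f g : ι → β) : hammingDist (f ∘ e) (g ∘ e) = hammingDist f g := by
  simp only [hammingDist, Finset.card_filter]
  exact e.sum_comp fun i => if f i ≠ g i then 1 else 0

theorem hammingDist_ofOnes_singleton {n p q : ℕ} (hp : p < n) (hq : q < n) (hpq : p ≠ q) :
    hammingDist (ofOnes n {p}) (ofOnes n {q}) = 2 := by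
  have : Finset.univ.filter (fun j => ofOnes n {p} j ≠ ofOnes n {q} j)
      = {⟨p, hp⟩, ⟨q, hq⟩} := by
    ext j
    simp only [ofOnes, Finset.mem_filter, Finset.mem_univ, Finset.mem_singleton, Finset.mem_insert,
      Fin.ext_iff, ne_eq, decide_eq_decide, true_and]
    omega
  rw [hammingDist, this, Finset.card_pair (by simpa [Fin.ext_iff] using hpq)]

section Embed9

variable {d : ℕ}

theorem embed9_eq_append (hd : 9 ≤ d) (s : Finset ℕ) (x : Cube (d - 9)) :
    embed9 d s x = Fin.append (ofOnes 9 s) x ∘ finCongr (by omega : d = 9 + (d - 9)) := by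
  funext j
  by_cases hj : j.val < 9
  · simp [embed9, hj, Fin.append, Fin.addCases, ofOnes]
  · simp only [embed9, hj, ↓reduceDIte, Fin.append, Function.comp_apply, Fin.addCases,
      finCongr_apply, Fin.val_cast, Fin.cast_cast, eq_rec_constant]
    rfl

theorem hammingDist_embed9 (hd : 9 ≤ d) (s s' : Finset ℕ) (x x' : Cube (d - 9)) :
    hammingDist (embed9 d s x) (embed9 d s' x') =
      hammingDist (ofOnes 9 s) (ofOnes 9 s') + hammingDist x x' := by
  rw [embed9_eq_append hd, embed9_eq_append hd, hammingDist_comp_equiv, hammingDist_fin_append]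

theorem mem_or_mem_of_embed9_ne (s s' : Finset ℕ) (x : Cube (d - 9)) (j : Fin d)
    (h : embed9 d s x j ≠ embed9 d s' x j) : j.val ∈ s ∨ j.val ∈ s' := by
  unfold embed9 at h
  split_ifs at h
  · by_contra! hj
    simp [hj.1, hj.2] at h
  · exact absurd rfl h

end Embed9

namespace IsSnake

variable {n k T : ℕ} {S : ℕ → Cube n}

theorem mod_three_eq_of_mem_snakeTail (hS : IsSnake n k T S) {x : Cube n} {i i' : ℕ}
    (hi : x ∈ SnakeTail n T S i) (hi' : x ∈ SnakeTail n T S i') : i % 3 = i' % 3 := by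
  obtain ⟨j, hj, rfl⟩ := hi
  obtain ⟨j', hj', h⟩ := hi'
  have := hS.2.1 _ _ (by omega) (by omega) h
  omega

theorem eq_of_mem_snakeTail_of_hammingDist_lt_three (hS : IsSnake n 3 T S) {x x' : Cube n}
    {i : ℕ} (hx : x ∈ SnakeTail n T S i) (hx' : x' ∈ SnakeTail n T S i)
    (h : hammingDist x x' < 3) : x = x' := by
  obtain ⟨j, hj, rfl⟩ := hx
  obtain ⟨j', hj', rfl⟩ := hx'
  rcases lt_trichotomy j j' with hlt | rfl | hlt
  · have := hS.2.2 (T - i - 3 * j') (T - i - 3 * j) (by omega) (by omega)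
    rw [hammingDist_comm] at h
    omega
  · rfl
  · have := hS.2.2 (T - i - 3 * j) (T - i - 3 * j') (by omega) (by omega)
    omega

end IsSnake

section I0

variable {d T : ℕ} {S : ℕ → Cube (d - 9)} {i : ℕ} {x : Cube (d - 9)}

theorem mem_I0 (hi : i ∈ ({1, 2, 3} : Set ℕ)) (hx : x ∈ SnakeTail (d - 9) T S i) {p : ℕ}
    (hp : p = 2 * i + 1 ∨ p = 2 * i + 2) : embed9 d {p} x ∈ I0 d T S := by
  rcases hp with rfl | rfl
  exacts [⟨i, hi, x, hx, Or.inl rfl⟩, ⟨i, hi, x, hx, Or.inr rfl⟩]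

theorem exists_eq_embed9_of_mem_I0_of_hammingDist_le_two (hd : 9 ≤ d)
    (hS : IsSnake (d - 9) 3 T S) (hi : i ∈ ({1, 2, 3} : Set ℕ))
    (hx : x ∈ SnakeTail (d - 9) T S i) {p : ℕ} (hp : p = 2 * i + 1 ∨ p = 2 * i + 2)
    {v : Cube d} (hv : v ∈ I0 d T S) (hpv : hammingDist (embed9 d {p} x) v ≤ 2) :
    ∃ r, (r = 2 * i + 1 ∨ r = 2 * i + 2) ∧ v = embed9 d {r} x := by
  obtain ⟨i', hi', x', hx', hv⟩ := hv
  obtain ⟨r, hr, rfl⟩ : ∃ r, (r = 2 * i' + 1 ∨ r = 2 * i' + 2) ∧ v = embed9 d {r} x' := by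
    rcases hv with rfl | rfl
    exacts [⟨_, Or.inl rfl, rfl⟩, ⟨_, Or.inr rfl, rfl⟩]
  simp only [Set.mem_insert_iff, Set.mem_singleton_iff] at hi hi'
  rw [hammingDist_embed9 hd] at hpv
  by_cases hpr : p = r
  · subst hpr
    obtain rfl : i = i' := by omega
    rw [hammingDist_self, zero_add] at hpv
    obtain rfl := hS.eq_of_mem_snakeTail_of_hammingDist_lt_three hx hx' (by omega)
    exact ⟨p, hp, rfl⟩
  · rw [hammingDist_ofOnes_singleton (by omega) (by omega) hpr] at hpv
    obtain rfl : x = x' := hammingDist_eq_zero.mp (by omega)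
    have := hS.mod_three_eq_of_mem_snakeTail hx hx'
    obtain rfl : i = i' := by omega
    exact ⟨r, hr, rfl⟩

theorem setOf_mem_I0_near_embed9_eq (hd : 9 ≤ d) (hS : IsSnake (d - 9) 3 T S)
    (hi : i ∈ ({1, 2, 3} : Set ℕ)) (hx : x ∈ SnakeTail (d - 9) T S i) {p q : ℕ}
    (hp : p = 2 * i + 1 ∨ p = 2 * i + 2) (hq : q = 2 * i + 1 ∨ q = 2 * i + 2) (hpq : p ≠ q) :
    {v | v ∈ I0 d T S ∧ v ≠ embed9 d {p} x ∧ hammingDist (embed9 d {p} x) v ≤ 2} =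
      {embed9 d {q} x} := by
  have hi3 : i ≤ 3 := by simp only [Set.mem_insert_iff, Set.mem_singleton_iff] at hi; omega
  have hdist : hammingDist (embed9 d {p} x) (embed9 d {q} x) = 2 := by
    rw [hammingDist_embed9 hd, hammingDist_ofOnes_singleton (by omega) (by omega) hpq,
      hammingDist_self]
  ext v
  constructor
  · rintro ⟨hv, hvp, hpv⟩
    obtain ⟨r, hr, rfl⟩ :=
      exists_eq_embed9_of_mem_I0_of_hammingDist_le_two hd hS hi hx hp hv hpv
    obtain rfl : r = q := by
      by_contra hrq
      exact hvp (by congr; omega)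
    rfl
  · rintro rfl
    exact ⟨mem_I0 hi hx hq, fun h => by simp [h] at hdist, hdist.le⟩

end I0

theorem stmt17_general (d : ℕ) (hd : 15 ≤ d) (T : ℕ)
    (S : ℕ → Cube (d - 9)) (hS : IsSnake (d - 9) 3 T S) :
    ∀ i ∈ ({1, 2, 3} : Set ℕ), ∀ x ∈ SnakeTail (d - 9) T S i,
      hammingDist (embed9 d {2 * i + 1} x) (embed9 d {2 * i + 2} x) = 2 ∧
      (∀ j : Fin d, embed9 d {2 * i + 1} x j ≠ embed9 d {2 * i + 2} x j →
        3 ≤ j.val ∧ j.val ≤ 8) ∧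
      {v | v ∈ I0 d T S ∧ v ≠ embed9 d {2 * i + 1} x ∧
          hammingDist (embed9 d {2 * i + 1} x) v ≤ 2} =
        {embed9 d {2 * i + 2} x} ∧
      {v | v ∈ I0 d T S ∧ v ≠ embed9 d {2 * i + 2} x ∧
          hammingDist (embed9 d {2 * i + 2} x) v ≤ 2} =
        {embed9 d {2 * i + 1} x} := by
  intro i hi x hx
  have hd9 : 9 ≤ d := by omega
  have hi3 : 1 ≤ i ∧ i ≤ 3 := by
    simp only [Set.mem_insert_iff, Set.mem_singleton_iff] at hi; omega
  refine ⟨?_, fun j hj => ?_, setOf_mem_I0_near_embed9_eq hd9 hS hi hx (by omega) (by omega)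
    (by omega), setOf_mem_I0_near_embed9_eq hd9 hS hi hx (by omega) (by omega) (by omega)⟩
  · rw [hammingDist_embed9 hd9, hammingDist_ofOnes_singleton (by omega) (by omega) (by omega),
      hammingDist_self]
  · have := mem_or_mem_of_embed9_ne _ _ x j hj
    simp only [Finset.mem_singleton] at this
    omega

/-- Let `d ≥ 15` be odd, `d'' = d − 9`, and let `S` be a `3`-snake of
length `T ≥ 3` in `Q_{d''}`. Every vertex `i₁ ∈ I_0` has exactly one other vertex
`i₂ ∈ I_0` at Hamming distance at most `2`, namely the one obtained by exchanging the two
coordinates in (1-indexed) positions `2i+2` and `2i+3`; it is at distance exactly `2`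
from `i₁` and differs from `i₁` only in coordinates among positions 4 through 9. -/
theorem stmt17 (d : ℕ) (hd : 15 ≤ d) (hodd : Odd d) (T : ℕ) (hT : 3 ≤ T)
    (S : ℕ → Cube (d - 9)) (hS : IsSnake (d - 9) 3 T S) :
    ∀ i ∈ ({1, 2, 3} : Set ℕ), ∀ x ∈ SnakeTail (d - 9) T S i,
      hammingDist (embed9 d {2 * i + 1} x) (embed9 d {2 * i + 2} x) = 2 ∧
      (∀ j : Fin d, embed9 d {2 * i + 1} x j ≠ embed9 d {2 * i + 2} x j →
        3 ≤ j.val ∧ j.val ≤ 8) ∧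
      {v | v ∈ I0 d T S ∧ v ≠ embed9 d {2 * i + 1} x ∧
          hammingDist (embed9 d {2 * i + 1} x) v ≤ 2} =
        {embed9 d {2 * i + 2} x} ∧
      {v | v ∈ I0 d T S ∧ v ≠ embed9 d {2 * i + 2} x ∧
          hammingDist (embed9 d {2 * i + 2} x) v ≤ 2} =
        {embed9 d {2 * i + 1} x} :=
  stmt17_general d hd T S hS
end

section
/- Let d ≥ 15 be odd, d'' = d − 9, and let S be a 3-snake of length T in Q_{d''} satisfying the five snake conditions. Then the three sets I_0, J_2 and J_3 pairwise have no common neighbours in Q_d: there is no vertex of Q_d adjacent simultaneously to a vertex of I_0 and a vertex of J_2, none adjacent simultaneously to a vertex of I_0 and a vertex of J_3, and none adjacent simultaneously to a vertex of J_2 and a vertex of J_3. -/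
/- Two vertices with a common neighbour are at distance at most 2, so it suffices to find three
coordinates separating any two vertices taken from different sets. A vertex of `J_2` and one of
`J_3` differ at coordinate 3 and at the adjacent pair of ones of the `J_3` vertex. A vertex of
`I_0` has a single one in its 9-bit prefix, at a position `≥ 4`, so it differs from a vertex of
`J_2` there and at both ones of the latter. The `(d - 9)`-suffix of a vertex of `J_3` is `0` or
a word `0^m 1 1 0^*`, whereas by the snake conditions the suffix of a vertex of `I_0` has weight
`> 3` or is one of `1`, `101`, `10101` (padded with zeros); a coordinate where these suffixes
differ, the `J_3` one among coordinates 1, 2, and a suitable prefix position make three. -/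

section Hamming

variable {ι β : Type*} [Fintype ι] [DecidableEq β]

lemma card_le_hammingDist {x y : ι → β} {s : Finset ι} (h : ∀ i ∈ s, x i ≠ y i) :
    s.card ≤ hammingDist x y :=
  Finset.card_le_card fun i hi => Finset.mem_filter.2 ⟨Finset.mem_univ i, h i hi⟩

lemma three_le_hammingDist [DecidableEq ι] {x y : ι → β} {i j k : ι}
    (hij : i ≠ j) (hik : i ≠ k) (hjk : j ≠ k)
    (hi : x i ≠ y i) (hj : x j ≠ y j) (hk : x k ≠ y k) : 3 ≤ hammingDist x y := by
  have h := card_le_hammingDist (s := {i, j, k}) (x := x) (y := y) (by simp [*])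
  rwa [Finset.card_eq_three.2 ⟨i, j, k, hij, hik, hjk, rfl⟩] at h

lemma not_exists_common_neighbor {A B : Set (ι → β)}
    (h : ∀ a ∈ A, ∀ b ∈ B, 3 ≤ hammingDist a b) :
    ¬ ∃ v, (∃ a ∈ A, hammingDist v a = 1) ∧ (∃ b ∈ B, hammingDist v b = 1) := by
  rintro ⟨v, ⟨a, ha, hva⟩, b, hb, hvb⟩
  have := hammingDist_triangle a v b
  rw [hammingDist_comm a v, hva, hvb] at this
  have := h a ha b hb
  omega

end Hamming

lemma wt_ofOnes_le (d : ℕ) (s : Finset ℕ) : wt (ofOnes d s) ≤ s.card :=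
  Finset.card_le_card_of_injOn (s := Finset.univ.filter _) Fin.val
    (fun i hi => by simpa [ofOnes] using hi) Fin.val_injective.injOn

lemma embed9_mk_of_lt {d k : ℕ} (ys : Finset ℕ) (x : Cube (d - 9)) (hk : k < d)
    (h9 : k < 9) : embed9 d ys x ⟨k, hk⟩ = decide (k ∈ ys) :=
  dif_pos h9

lemma embed9_mk_add_nine {d : ℕ} (ys : Finset ℕ) (x : Cube (d - 9)) (k : Fin (d - 9)) :
    embed9 d ys x ⟨k + 9, by omega⟩ = x k :=
  dif_neg (by simp)

lemma exists_of_mem_J2 {d : ℕ} {b : Cube d} (hb : b ∈ J2 d) :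
    ∃ q ≤ 1, b = ofOnes d {q, 2} := by
  rcases hb with rfl | rfl
  exacts [⟨0, zero_le_one, rfl⟩, ⟨1, le_rfl, rfl⟩]

lemma exists_of_mem_J3 {d : ℕ} {b : Cube d} (hb : b ∈ J3 d) :
    ∃ q ≤ 1, ∃ l, 2 * l + 2 ≤ d - 3 ∧ b = ofOnes d {q, 3 + 2 * l, 4 + 2 * l} := by
  obtain ⟨l, hl, rfl | rfl⟩ := hb
  exacts [⟨0, zero_le_one, l, hl, rfl⟩, ⟨1, le_rfl, l, hl, rfl⟩]

lemma exists_of_mem_I0 {d T : ℕ} {S : ℕ → Cube (d - 9)} {a : Cube d} (ha : a ∈ I0 d T S) :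
    ∃ p, 3 ≤ p ∧ p ≤ 8 ∧ ∃ t < T, a = embed9 d {p} (S t) := by
  obtain ⟨i, hi, x, ⟨j, hj, rfl⟩, rfl | rfl⟩ := ha <;>
  · obtain rfl | rfl | rfl : i = 1 ∨ i = 2 ∨ i = 3 := by simpa using hi
    all_goals exact ⟨_, by omega, by omega, _, by omega, rfl⟩

namespace SnakeConds

variable {d'' T : ℕ} {S : ℕ → Cube d''} {t : ℕ}

lemma eq_ofOnes_or_three_lt_wt (h : SnakeConds d'' T S) (ht : t < T) :
    S t = ofOnes d'' {0} ∨ S t = ofOnes d'' {0, 2} ∨ S t = ofOnes d'' {0, 2, 4} ∨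
      3 < wt (S t) := by
  obtain ⟨-, h1, h2, h3, h4⟩ := h
  rcases (by omega : t = T - 1 ∨ t = T - 2 ∨ t = T - 3 ∨ t < T - 3) with rfl | rfl | rfl | ht'
  exacts [.inl h1, .inr (.inl h2), .inr (.inr (.inl h3)), .inr (.inr (.inr (h4 t ht')))]

lemma ne_ofOnes_of_card_le_three (h : SnakeConds d'' T S) (ht : t < T) {s : Finset ℕ}
    (hs : s.card ≤ 3) (h1 : ofOnes d'' {0} ≠ ofOnes d'' s)
    (h2 : ofOnes d'' {0, 2} ≠ ofOnes d'' s) (h3 : ofOnes d'' {0, 2, 4} ≠ ofOnes d'' s) :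
    S t ≠ ofOnes d'' s := by
  rcases h.eq_ofOnes_or_three_lt_wt ht with hst | hst | hst | hwt
  · rwa [hst]
  · rwa [hst]
  · rwa [hst]
  · intro hst
    have := wt_ofOnes_le d'' s
    rw [← hst] at this
    omega

lemma ne_ofOnes_empty (h : SnakeConds d'' T S) (hd'' : 0 < d'') (ht : t < T) :
    S t ≠ ofOnes d'' ∅ := by
  refine h.ne_ofOnes_of_card_le_three ht (by simp) ?_ ?_ ?_ <;>
    exact fun he => by simpa [ofOnes] using congrFun he ⟨0, hd''⟩

lemma ne_ofOnes_pair (h : SnakeConds d'' T S) (ht : t < T) {m : ℕ} (hm : m + 1 < d'') :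
    S t ≠ ofOnes d'' {m, m + 1} := by
  refine h.ne_ofOnes_of_card_le_three ht (Finset.card_le_two.trans (by norm_num)) ?_ ?_ ?_ <;>
  · intro he
    have hm₀ := congrFun he ⟨m, by omega⟩
    have hm₁ := congrFun he ⟨m + 1, hm⟩
    simp [ofOnes] at hm₀ hm₁ <;> omega

end SnakeConds

lemma three_le_hammingDist_of_mem_J2_of_mem_J3 {d : ℕ} {a b : Cube d} (ha : a ∈ J2 d)
    (hb : b ∈ J3 d) : 3 ≤ hammingDist a b := by
  obtain ⟨q', hq', rfl⟩ := exists_of_mem_J2 ha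
  obtain ⟨q, hq, l, hl, rfl⟩ := exists_of_mem_J3 hb
  refine three_le_hammingDist (i := ⟨2, by omega⟩) (j := ⟨3 + 2 * l, by omega⟩)
    (k := ⟨4 + 2 * l, by omega⟩) ?_ ?_ ?_ ?_ ?_ ?_ <;> simp [ofOnes, Fin.ext_iff] <;> omega

lemma three_le_hammingDist_embed9_of_mem_J2 {d p : ℕ} (hd : 9 ≤ d) (hp3 : 3 ≤ p)
    (hp8 : p ≤ 8) (x : Cube (d - 9)) {b : Cube d} (hb : b ∈ J2 d) :
    3 ≤ hammingDist (embed9 d {p} x) b := by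
  obtain ⟨q, hq, rfl⟩ := exists_of_mem_J2 hb
  refine three_le_hammingDist (i := ⟨q, by omega⟩) (j := ⟨2, by omega⟩)
    (k := ⟨p, by omega⟩) ?_ ?_ ?_ ?_ ?_ ?_ <;>
    simp (disch := omega) [embed9_mk_of_lt, ofOnes, Fin.ext_iff] <;> omega

lemma three_le_hammingDist_embed9_of_mem_J3 {d p : ℕ} (hp3 : 3 ≤ p) (hp8 : p ≤ 8)
    {x : Cube (d - 9)} (hx₀ : x ≠ ofOnes (d - 9) ∅)
    (hx₂ : ∀ m, m + 1 < d - 9 → x ≠ ofOnes (d - 9) {m, m + 1})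
    {b : Cube d} (hb : b ∈ J3 d) : 3 ≤ hammingDist (embed9 d {p} x) b := by
  obtain ⟨q, hq, l, hl, rfl⟩ := exists_of_mem_J3 hb
  -- the suffix of `b` is `0` when its pair of ones lies in the prefix, and `0^m 1 1 0^*` otherwise
  obtain ⟨k, hk⟩ : ∃ k : Fin (d - 9),
      x k ≠ decide (k.val + 9 ∈ ({q, 3 + 2 * l, 4 + 2 * l} : Finset ℕ)) := by
    by_contra! hsuffix
    by_cases hl3 : l < 3
    · exact hx₀ (funext fun k => by simp [hsuffix k, ofOnes]; omega)
    · refine hx₂ (2 * l - 6) (by omega) (funext fun k => ?_)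
      rw [hsuffix k, ofOnes, Bool.eq_iff_iff]
      simp
      omega
  obtain ⟨r, hr2, hr9, hr⟩ : ∃ r, 2 ≤ r ∧ r < 9 ∧
      decide (r = p) ≠ decide (r ∈ ({q, 3 + 2 * l, 4 + 2 * l} : Finset ℕ)) := by
    by_cases hl3 : l < 3
    · by_cases hp : p = 3 + 2 * l
      · exact ⟨4 + 2 * l, by omega, by omega, by simp; omega⟩
      · exact ⟨3 + 2 * l, by omega, by omega, by simp; omega⟩
    · exact ⟨p, by omega, by omega, by simp; omega⟩
  have hkd := k.isLt
  refine three_le_hammingDist (i := ⟨q, by omega⟩) (j := ⟨r, by omega⟩)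
    (k := ⟨k + 9, by omega⟩) ?_ ?_ ?_ ?_ ?_ ?_
  · simp [Fin.ext_iff]; omega
  · simp [Fin.ext_iff]; omega
  · simp [Fin.ext_iff]; omega
  · simp (disch := omega) [embed9_mk_of_lt, ofOnes]; omega
  · simpa (disch := omega) [embed9_mk_of_lt, ofOnes] using hr
  · simpa [embed9_mk_add_nine, ofOnes] using hk

theorem stmt18_general (d : ℕ) (hd : 15 ≤ d) (T : ℕ) (S : ℕ → Cube (d - 9))
    (hconds : SnakeConds (d - 9) T S) :
    (¬ ∃ v : Cube d, (∃ a ∈ I0 d T S, hammingDist v a = 1) ∧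
        (∃ b ∈ J2 d, hammingDist v b = 1)) ∧
    (¬ ∃ v : Cube d, (∃ a ∈ I0 d T S, hammingDist v a = 1) ∧
        (∃ b ∈ J3 d, hammingDist v b = 1)) ∧
    (¬ ∃ v : Cube d, (∃ a ∈ J2 d, hammingDist v a = 1) ∧
        (∃ b ∈ J3 d, hammingDist v b = 1)) := by
  refine ⟨not_exists_common_neighbor fun a ha b hb => ?_,
    not_exists_common_neighbor fun a ha b hb => ?_,
    not_exists_common_neighbor fun a ha b hb => three_le_hammingDist_of_mem_J2_of_mem_J3 ha hb⟩
  all_goals obtain ⟨p, hp3, hp8, t, ht, rfl⟩ := exists_of_mem_I0 ha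
  · exact three_le_hammingDist_embed9_of_mem_J2 (by omega) hp3 hp8 (S t) hb
  · exact three_le_hammingDist_embed9_of_mem_J3 hp3 hp8 (hconds.ne_ofOnes_empty (by omega) ht)
      (fun m hm => hconds.ne_ofOnes_pair ht hm) hb

/-- Let `d ≥ 15` be odd, `d'' = d − 9`, and let `S` be a `3`-snake of
length `T` in `Q_{d''}` satisfying the five snake conditions. Then `I_0`, `J_2` and `J_3`
pairwise have no common neighbours in `Q_d`. -/
theorem stmt18 (d : ℕ) (hd : 15 ≤ d) (hodd : Odd d) (T : ℕ) (S : ℕ → Cube (d - 9))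
    (hsnake : IsSnake (d - 9) 3 T S) (hconds : SnakeConds (d - 9) T S) :
    (¬ ∃ v : Cube d, (∃ a ∈ I0 d T S, hammingDist v a = 1) ∧
        (∃ b ∈ J2 d, hammingDist v b = 1)) ∧
    (¬ ∃ v : Cube d, (∃ a ∈ I0 d T S, hammingDist v a = 1) ∧
        (∃ b ∈ J3 d, hammingDist v b = 1)) ∧
    (¬ ∃ v : Cube d, (∃ a ∈ J2 d, hammingDist v a = 1) ∧
        (∃ b ∈ J3 d, hammingDist v b = 1)) :=
  stmt18_general d hd T S hconds
end
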